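/- (Lemmas 5.1 and 5.2) There exists an absolute constant c > 0 such that for every x ∈ ℝ and every t ∈ [x − d(x)/2, x + d(x)/2]: c^{−1}·v(x) ≤ v(t) ≤ c·v(x) and c^{−1}·u(x) ≤ u(t) ≤ c·u(x); moreover, if f_x denotes the characteristic function of the segment Δ(x) = [x − d(x)/2, x + d(x)/2], then (G f_x)(t) ≥ c^{−1}·d(x)² for every t ∈ Δ(x). -/

import Mathlib

open MeasureTheory Filter Real Set
open scoped ENNReal

noncomputable section

/-- Condition (1.5): for every `a > 0`, `∫_{x-a}^{x+a} q(t) dt → ∞` as `|x| → ∞`. -/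
def Cond15 (q : ℝ → ℝ) : Prop :=
  ∀ a : ℝ, 0 < a → Tendsto (fun x => ∫ t in (x - a)..(x + a), q t) (cocompact ℝ) atTop

/-- `(u, v)` is a principal fundamental system of solutions (PFSS) of `z'' = q z`.
Local absolute continuity of `u'` together with `u'' = q u` a.e. is encoded via the
fundamental theorem of calculus: `u' b - u' a = ∫_a^b q t * u t dt` for all `a, b`. -/
def IsPFSS (q u v : ℝ → ℝ) : Prop :=
  ContDiff ℝ 1 u ∧ ContDiff ℝ 1 v ∧
  (∀ a b : ℝ, deriv u b - deriv u a = ∫ t in a..b, q t * u t) ∧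
  (∀ a b : ℝ, deriv v b - deriv v a = ∫ t in a..b, q t * v t) ∧
  (∀ x, 0 < u x) ∧ (∀ x, 0 < v x) ∧
  (∀ x, deriv u x < 0) ∧ (∀ x, 0 < deriv v x) ∧
  (∀ x, deriv v x * u x - deriv u x * v x = 1) ∧
  (∀ x, u x = v x * ∫ t in Set.Ioi x, ((v t) ^ 2)⁻¹) ∧
  Tendsto u atTop (nhds 0) ∧ Tendsto (deriv u) atTop (nhds 0) ∧
  Tendsto v atTop atTop ∧ Tendsto (deriv v) atTop atTop ∧
  Tendsto v atBot (nhds 0) ∧ Tendsto (deriv v) atBot (nhds 0) ∧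
  Tendsto u atBot atTop ∧ Tendsto (fun x => |deriv u x|) atBot atTop

/-- The Green function: `G(x,t) = u(x) v(t)` for `x ≥ t`, `G(x,t) = u(t) v(x)` for `x ≤ t`. -/
def GreenFn (u v : ℝ → ℝ) (x t : ℝ) : ℝ := if x ≤ t then u t * v x else u x * v t

/-- The Green operator `(Gf)(x) = ∫_ℝ G(x,t) f(t) dt`. -/
def GreenOp (u v f : ℝ → ℝ) (x : ℝ) : ℝ := ∫ t, GreenFn u v x t * f t

/-! Positive solutions of `w'' = q w` with `q ≥ 0` are convex. If `w` is increasing and `y ∈ Δ(x)`,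
convexity gives `(d/2) w'(y - d/2) ≤ w(y)`, and `w'(y) - w'(y - d/2) = ∫ q w ≤ (2/d) w(y)` because
`d ∫_{x-d}^{x+d} q = 2`; hence `d |w'| ≤ 4 w` on `Δ(x)`, and symmetrically for decreasing `w`.
Integrating `(log w)'` gives `e⁻² w(x) ≤ w(t) ≤ e² w(x)` on `Δ(x)` for `w = u, v`. So the Green
function is at least `e⁻⁴ u(x) v(x)` on `Δ(x)²`, while `u(x) v(x) = v(x)² ∫_x^∞ v⁻²` is at least
`v(x)² (d/2) (e² v(x))⁻²`; together these give `(G f_x)(t) ≥ d(x)² / (2 e⁸)`. -/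

section Solution

variable {q w : ℝ → ℝ} {a b : ℝ}

theorem integral_mul_le_integral_mul_const (hq0 : ∀ t, 0 ≤ q t)
    (hq : IntervalIntegrable q volume a b) (hw : Continuous w) (hab : a ≤ b) {M : ℝ}
    (hM : ∀ t ∈ Icc a b, w t ≤ M) :
    ∫ t in a..b, q t * w t ≤ (∫ t in a..b, q t) * M := by
  rw [← intervalIntegral.integral_mul_const]
  exact intervalIntegral.integral_mono_on hab (hq.mul_continuousOn hw.continuousOn)
    (hq.mul_const M) fun t ht => mul_le_mul_of_nonneg_left (hM t ht) (hq0 t)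

theorem monotone_deriv_of_integral_eq (hq0 : ∀ t, 0 ≤ q t) (hw0 : ∀ t, 0 ≤ w t)
    (hftc : ∀ a b, deriv w b - deriv w a = ∫ t in a..b, q t * w t) :
    Monotone (deriv w) := fun a b hab => by
  have := intervalIntegral.integral_nonneg (μ := volume) hab fun t _ => mul_nonneg (hq0 t) (hw0 t)
  linarith [hftc a b]

variable (hq0 : ∀ t, 0 ≤ q t) (hq : IntervalIntegrable q volume a b) (hw : ContDiff ℝ 1 w)
  (hw0 : ∀ t, 0 ≤ w t) (hftc : ∀ a b, deriv w b - deriv w a = ∫ t in a..b, q t * w t)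
include hq0 hq hw hw0 hftc

theorem mul_deriv_le_of_monotone (hw_mono : Monotone w) (hab : a ≤ b) :
    (b - a) * deriv w b ≤ (1 + (b - a) * ∫ t in a..b, q t) * w b := by
  have hconvex : deriv w a * (b - a) ≤ w b - w a :=
    (convex_Icc a b).mul_sub_le_image_sub_of_le_deriv hw.continuous.continuousOn
      (hw.differentiable one_ne_zero).differentiableOn
      (fun t ht => monotone_deriv_of_integral_eq hq0 hw0 hftc (interior_subset ht).1)
      a (left_mem_Icc.2 hab) b (right_mem_Icc.2 hab) hab
  have hgrowth : deriv w b - deriv w a ≤ (∫ t in a..b, q t) * w b :=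
    hftc a b ▸ integral_mul_le_integral_mul_const hq0 hq hw.continuous hab
      fun t ht => hw_mono ht.2
  nlinarith [mul_le_mul_of_nonneg_left hgrowth (sub_nonneg.2 hab), hw0 a]

theorem mul_neg_deriv_le_of_antitone (hw_anti : Antitone w) (hab : a ≤ b) :
    (b - a) * -deriv w a ≤ (1 + (b - a) * ∫ t in a..b, q t) * w a := by
  have hconvex : w b - w a ≤ deriv w b * (b - a) :=
    (convex_Icc a b).image_sub_le_mul_sub_of_deriv_le hw.continuous.continuousOn
      (hw.differentiable one_ne_zero).differentiableOn
      (fun t ht => monotone_deriv_of_integral_eq hq0 hw0 hftc (interior_subset ht).2)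
      a (left_mem_Icc.2 hab) b (right_mem_Icc.2 hab) hab
  have hgrowth : deriv w b - deriv w a ≤ (∫ t in a..b, q t) * w a :=
    hftc a b ▸ integral_mul_le_integral_mul_const hq0 hq hw.continuous hab
      fun t ht => hw_anti ht.1
  nlinarith [mul_le_mul_of_nonneg_left hgrowth (sub_nonneg.2 hab), hw0 b]

end Solution

theorem le_exp_mul_of_abs_deriv_le {w : ℝ → ℝ} (hw_pos : ∀ t, 0 < w t) (hw : Differentiable ℝ w)
    {s : Set ℝ} (hs : Convex ℝ s) {K : ℝ} (hK : ∀ y ∈ s, |deriv w y| ≤ K * w y) {x y : ℝ}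
    (hx : x ∈ s) (hy : y ∈ s) :
    w y ≤ exp (K * |y - x|) * w x := by
  have hlog : |log (w y) - log (w x)| ≤ K * |y - x| := by
    refine hs.norm_image_sub_le_of_norm_deriv_le (f := fun t => log (w t))
      (fun t _ => (hw t).log (hw_pos t).ne') (fun t ht => ?_) hx hy
    rw [((hw t).hasDerivAt.log (hw_pos t).ne').deriv, norm_div, Real.norm_of_nonneg (hw_pos t).le,
      div_le_iff₀ (hw_pos t)]
    exact hK t ht
  rw [← log_le_log_iff (hw_pos y) (mul_pos (exp_pos _) (hw_pos x)),
    log_mul (exp_pos _).ne' (hw_pos x).ne', log_exp]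
  linarith [(abs_le.1 hlog).2]

section Window

variable {q w : ℝ → ℝ} {x d : ℝ} (hq_loc : LocallyIntegrable q) (hq0 : ∀ t, 0 ≤ q t)
  (hw : ContDiff ℝ 1 w) (hw_pos : ∀ t, 0 < w t)
  (hftc : ∀ a b, deriv w b - deriv w a = ∫ t in a..b, q t * w t)
  (hw_mono : Monotone w ∨ Antitone w) (hd : 0 < d) (hQ : d * ∫ t in (x - d)..(x + d), q t ≤ 2)
include hq_loc hq0 hw hw_pos hftc hw_mono hd hQ

theorem mul_abs_deriv_le_of_mem_window {y : ℝ} (hy : y ∈ Icc (x - d / 2) (x + d / 2)) :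
    d * |deriv w y| ≤ 4 * w y := by
  have hint (a b : ℝ) : IntervalIntegrable q volume a b :=
    (hq_loc.integrableOn_isCompact isCompact_uIcc).intervalIntegrable
  have hsub {a b : ℝ} (ha : x - d ≤ a) (hab : a ≤ b) (hb : b ≤ x + d) :
      d / 2 * ∫ t in a..b, q t ≤ 1 := by
    have := intervalIntegral.integral_mono_interval ha hab hb
      (Filter.Eventually.of_forall hq0) (hint (x - d) (x + d))
    nlinarith
  have hw0 (t : ℝ) : 0 ≤ w t := (hw_pos t).le
  obtain ⟨hy₁, hy₂⟩ := hy
  rcases hw_mono with hmono | hanti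
  · have h := mul_deriv_le_of_monotone hq0 (hint (y - d / 2) y) hw hw0 hftc hmono
      (by linarith)
    rw [sub_sub_cancel] at h
    rw [abs_of_nonneg hmono.deriv_nonneg]
    nlinarith [hsub (by linarith) (by linarith : y - d / 2 ≤ y) (by linarith), hw0 y]
  · have h := mul_neg_deriv_le_of_antitone hq0 (hint y (y + d / 2)) hw hw0 hftc hanti
      (by linarith)
    rw [add_sub_cancel_left] at h
    rw [abs_of_nonpos hanti.deriv_nonpos]
    nlinarith [hsub (by linarith) (by linarith : y ≤ y + d / 2) (by linarith), hw0 y]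

theorem le_exp_two_mul_of_mem_window {t : ℝ} (ht : t ∈ Icc (x - d / 2) (x + d / 2)) :
    w t ≤ exp 2 * w x ∧ w x ≤ exp 2 * w t := by
  have hK (y : ℝ) (hy : y ∈ Icc (x - d / 2) (x + d / 2)) : |deriv w y| ≤ 4 / d * w y := by
    rw [div_mul_eq_mul_div, le_div_iff₀ hd, mul_comm]
    exact mul_abs_deriv_le_of_mem_window hq_loc hq0 hw hw_pos hftc hw_mono hd hQ hy
  have hx : x ∈ Icc (x - d / 2) (x + d / 2) := ⟨by linarith, by linarith⟩
  have hexp : exp (4 / d * |t - x|) ≤ exp 2 := by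
    have hdist : |t - x| ≤ d / 2 := abs_sub_le_iff.2 ⟨by linarith [ht.2], by linarith [ht.1]⟩
    refine exp_le_exp.2 ?_
    rw [div_mul_eq_mul_div, div_le_iff₀ hd]
    linarith
  have hdiff := hw.differentiable one_ne_zero
  constructor
  · exact (le_exp_mul_of_abs_deriv_le hw_pos hdiff (convex_Icc _ _) hK hx ht).trans
      (mul_le_mul_of_nonneg_right hexp (hw_pos x).le)
  · refine (le_exp_mul_of_abs_deriv_le hw_pos hdiff (convex_Icc _ _) hK ht hx).trans ?_
    rw [abs_sub_comm]
    exact mul_le_mul_of_nonneg_right hexp (hw_pos t).le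

end Window

theorem mul_le_greenFn {u v : ℝ → ℝ} {S : Set ℝ} {α β : ℝ} (hα : 0 ≤ α) (hβ : 0 ≤ β)
    (hu : ∀ p ∈ S, α ≤ u p) (hv : ∀ p ∈ S, β ≤ v p) {t s : ℝ} (ht : t ∈ S) (hs : s ∈ S) :
    α * β ≤ GreenFn u v t s := by
  unfold GreenFn
  split_ifs
  · exact mul_le_mul (hu s hs) (hv t ht) hβ (hα.trans (hu s hs))
  · exact mul_le_mul (hu t ht) (hv s hs) hβ (hα.trans (hu t ht))

theorem mul_sub_le_greenOp_indicator {u v : ℝ → ℝ} (hu : Continuous u) (hv : Continuous v)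
    {a b t m : ℝ} (hab : a ≤ b) (hm : ∀ s ∈ Icc a b, m ≤ GreenFn u v t s) :
    m * (b - a) ≤ GreenOp u v ((Icc a b).indicator fun _ => 1) t := by
  have hcont : Continuous (GreenFn u v t) :=
    Continuous.if_le (hu.mul continuous_const) (continuous_const.mul hv)
      continuous_const continuous_id fun s hs => by rw [← hs]
  have hindicator : (fun s => GreenFn u v t s * (Icc a b).indicator (fun _ => (1 : ℝ)) s)
      = (Icc a b).indicator (GreenFn u v t) := by
    ext s
    by_cases hs : s ∈ Icc a b <;> simp [hs]
  rw [GreenOp, hindicator, integral_indicator measurableSet_Icc]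
  calc m * (b - a) = ∫ _ in Icc a b, m := by
        rw [setIntegral_const, Real.volume_real_Icc_of_le hab, smul_eq_mul, mul_comm]
    _ ≤ ∫ s in Icc a b, GreenFn u v t s :=
        setIntegral_mono_on (integrableOn_const measure_Icc_lt_top.ne)
          (hcont.continuousOn.integrableOn_compact isCompact_Icc) measurableSet_Icc hm

theorem div_sq_le_mul_of_eq_mul_integral_Ioi {u v : ℝ → ℝ} (hv_pos : ∀ t, 0 < v t) {x h C : ℝ}
    (hux : 0 < u x) (hrep : u x = v x * ∫ t in Ioi x, (v t ^ 2)⁻¹) (hh : 0 ≤ h)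
    (hC : ∀ s ∈ Icc x (x + h), v s ≤ C * v x) :
    h / C ^ 2 ≤ u x * v x := by
  have hint : IntegrableOn (fun t => (v t ^ 2)⁻¹) (Ioi x) := by
    by_contra hnot
    rw [integral_undef hnot, mul_zero] at hrep
    exact hux.ne' hrep
  have hC0 : 0 < C * v x := (hv_pos x).trans_le (hC x ⟨le_rfl, by linarith⟩)
  have hpiece : h * ((C * v x) ^ 2)⁻¹ ≤ ∫ t in Ioi x, (v t ^ 2)⁻¹ :=
    calc h * ((C * v x) ^ 2)⁻¹ = ∫ _ in Ioc x (x + h), ((C * v x) ^ 2)⁻¹ := by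
          rw [setIntegral_const, Real.volume_real_Ioc_of_le (by linarith), smul_eq_mul,
            add_sub_cancel_left]
      _ ≤ ∫ t in Ioc x (x + h), (v t ^ 2)⁻¹ :=
          setIntegral_mono_on (integrableOn_const measure_Ioc_lt_top.ne)
            (hint.mono_set Ioc_subset_Ioi_self) measurableSet_Ioc fun s hs =>
            inv_anti₀ (pow_pos (hv_pos s) 2)
              (pow_le_pow_left₀ (hv_pos s).le (hC s (Ioc_subset_Icc_self hs)) 2)
      _ ≤ ∫ t in Ioi x, (v t ^ 2)⁻¹ :=
          setIntegral_mono_set hint (Filter.Eventually.of_forall fun t => by positivity)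
            Ioc_subset_Ioi_self.eventuallyLE
  have hvx := hv_pos x
  calc h / C ^ 2 = v x ^ 2 * (h * ((C * v x) ^ 2)⁻¹) := by field_simp
    _ ≤ v x ^ 2 * ∫ t in Ioi x, (v t ^ 2)⁻¹ := by gcongr
    _ = u x * v x := by rw [hrep]; ring

theorem sq_div_le_greenOp_indicator {u v : ℝ → ℝ} (hu : Continuous u) (hv : Continuous v)
    (hv_pos : ∀ t, 0 < v t) {x d E : ℝ} (hux : 0 < u x)
    (hrep : u x = v x * ∫ t in Ioi x, (v t ^ 2)⁻¹) (hd : 0 < d) (hE : 0 < E)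
    (hu_le : ∀ p ∈ Icc (x - d / 2) (x + d / 2), u x ≤ E * u p)
    (hv_le : ∀ p ∈ Icc (x - d / 2) (x + d / 2), v x ≤ E * v p)
    (hv_ge : ∀ p ∈ Icc (x - d / 2) (x + d / 2), v p ≤ E * v x)
    {t : ℝ} (ht : t ∈ Icc (x - d / 2) (x + d / 2)) :
    d ^ 2 / (2 * E ^ 4) ≤ GreenOp u v ((Icc (x - d / 2) (x + d / 2)).indicator fun _ => 1) t := by
  have hprod : d / 2 / E ^ 2 ≤ u x * v x :=
    div_sq_le_mul_of_eq_mul_integral_Ioi hv_pos hux hrep (by positivity)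
      fun s hs => hv_ge s ⟨by linarith [hs.1], hs.2⟩
  have hgreen := mul_sub_le_greenOp_indicator (t := t) hu hv
    (by linarith : x - d / 2 ≤ x + d / 2) fun s hs =>
      mul_le_greenFn (α := u x / E) (β := v x / E) (div_nonneg hux.le hE.le)
        (div_nonneg (hv_pos x).le hE.le)
        (fun p hp => (div_le_iff₀' hE).2 (hu_le p hp))
        (fun p hp => (div_le_iff₀' hE).2 (hv_le p hp)) ht hs
  rw [show x + d / 2 - (x - d / 2) = d by ring] at hgreen
  calc d ^ 2 / (2 * E ^ 4) = d / 2 / E ^ 2 * d / E ^ 2 := by field_simp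
    _ ≤ u x * v x * d / E ^ 2 := by gcongr
    _ = u x / E * (v x / E) * d := by field_simp
    _ ≤ _ := hgreen

theorem lemmas_5_1_and_5_2 (q u v : ℝ → ℝ) (hq_loc : LocallyIntegrable q)
    (hq : ∀ x, 1 ≤ q x) (huv : IsPFSS q u v) (d : ℝ → ℝ)
    (hd : ∀ x, 0 < d x ∧ (2 : ℝ) = d x * ∫ t in (x - d x)..(x + d x), q t) :
    ∃ c : ℝ, 0 < c ∧ ∀ x : ℝ, ∀ t ∈ Set.Icc (x - d x / 2) (x + d x / 2),
      (c⁻¹ * v x ≤ v t ∧ v t ≤ c * v x) ∧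
      (c⁻¹ * u x ≤ u t ∧ u t ≤ c * u x) ∧
      c⁻¹ * d x ^ 2 ≤
        GreenOp u v (Set.indicator (Set.Icc (x - d x / 2) (x + d x / 2)) fun _ => 1) t := by
  obtain ⟨hu, hv, hftc_u, hftc_v, hu_pos, hv_pos, hu', hv', -, hrep, -⟩ := huv
  have hq0 (t : ℝ) : 0 ≤ q t := zero_le_one.trans (hq t)
  set E := exp 2
  have hc : 0 < 2 * E ^ 4 := by positivity
  have hweaken {a b : ℝ} (hb : 0 < b) (h : a ≤ E * b) : a ≤ 2 * E ^ 4 * b := by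
    refine h.trans (mul_le_mul_of_nonneg_right ?_ hb.le)
    nlinarith [le_self_pow₀ (one_le_exp (by norm_num : (0 : ℝ) ≤ 2)) (by norm_num : 4 ≠ 0)]
  refine ⟨2 * E ^ 4, hc, fun x t ht => ?_⟩
  obtain ⟨hd, hdq⟩ := hd x
  have hv_window {p : ℝ} := le_exp_two_mul_of_mem_window hq_loc hq0 hv hv_pos hftc_v
    (Or.inl (strictMono_of_deriv_pos hv').monotone) hd hdq.ge (t := p)
  have hu_window {p : ℝ} := le_exp_two_mul_of_mem_window hq_loc hq0 hu hu_pos hftc_u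
    (Or.inr (strictAnti_of_deriv_neg hu').antitone) hd hdq.ge (t := p)
  refine ⟨⟨(inv_mul_le_iff₀ hc).2 (hweaken (hv_pos t) (hv_window ht).2),
      hweaken (hv_pos x) (hv_window ht).1⟩,
    ⟨(inv_mul_le_iff₀ hc).2 (hweaken (hu_pos t) (hu_window ht).2),
      hweaken (hu_pos x) (hu_window ht).1⟩, ?_⟩
  rw [inv_mul_eq_div]
  exact sq_div_le_greenOp_indicator hu.continuous hv.continuous hv_pos (hu_pos x) (hrep x) hd
    (exp_pos 2) (fun p hp => (hu_window hp).2) (fun p hp => (hv_window hp).2)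
    (fun p hp => (hv_window hp).1) ht
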